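/- arXiv:2408.13543 — 2 statements merged into one kernel-verified Lean document; each statement's English description precedes it below -/
import Mathlib

section
/- Let G be a connected graph, S, T ⊆ V(G), and let u be a vertex of degree 1 with unique neighbor v, where u ∈ S, |S| ≥ 2, and v ∉ T. Then G has an S-T-cut (R, B) with G[R] and G[B] connected, S ⊆ R, T ⊆ B, and |cut_G(R)| ≤ ℓ if and only if G − u has an (S∖{u}∪{v})-T-cut (R', B') with the same properties and |cut_{G−u}(R')| ≤ ℓ. -/
/-!
Since `u` is a leaf, for every `R ∋ u, v` the set `R' = R ∖ {u}` seen inside `G - u` is as good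
as `R`: deleting or re-adding a leaf next to `v` does not change connectivity of `G[R]`, the other
side `Rᶜ` does not meet `u` at all, and no cut edge is incident to `u`. It remains to see that
both kinds of solution put `v` on the side of `u`: in `G - u` because `v` is in the new source
set, and in `G` because `G[R]` is connected and contains a second vertex of `S`, so `u` has a
neighbour in `R`.
-/

/-- The set of edges of `G` with exactly one endpoint in `R`. -/
def cutEdges {V : Type*} (G : SimpleGraph V) (R : Set V) : Set (Sym2 V) :=
  {e | e ∈ G.edgeSet ∧ ∃ a b, e = s(a, b) ∧ a ∈ R ∧ b ∉ R}

/-- `G` has an `S`-`T`-cut `(R, B)` (with `B = Rᶜ`) such that `G[R]` and `G[B]` are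
connected and at most `ℓ` edges cross the cut. -/
def Solution {V : Type*} (G : SimpleGraph V) (S T : Set V) (ℓ : ℕ) : Prop :=
  ∃ R : Set V, S ⊆ R ∧ T ⊆ Rᶜ ∧ (G.induce R).Connected ∧ (G.induce Rᶜ).Connected ∧
    (cutEdges G R).ncard ≤ ℓ

namespace SimpleGraph

variable {V : Type*} {G : SimpleGraph V}

noncomputable def induceInduceIso (G : SimpleGraph V) (A : Set V) (R : Set A) :
    (G.induce A).induce R ≃g G.induce (Subtype.val '' R) where
  toEquiv := Equiv.Set.image Subtype.val R Subtype.val_injective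
  map_rel_iff' := by simp [Equiv.Set.image, Equiv.Set.imageOfInjOn]

lemma connected_induce_induce_iff (A : Set V) (R : Set A) :
    ((G.induce A).induce R).Connected ↔ (G.induce (Subtype.val '' R)).Connected :=
  (induceInduceIso G A R).connected_iff

lemma Connected.induce_diff_singleton {R : Set V} {u : V} (hR : (G.induce R).Connected)
    (hu : (G.neighborSet u).Subsingleton) (hne : (R \ {u}).Nonempty) :
    (G.induce (R \ {u})).Connected := by
  have hpre : ((G.induce R).induce {x : R | (x : V) ≠ u}).Preconnected :=
    hR.preconnected.induce_of_degree_eq_one fun x hx => by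
      obtain rfl : (x : V) = u := not_not.mp hx
      rw [neighborSet_induce]
      exact hu.preimage Subtype.val_injective
  have him : Subtype.val '' {x : R | (x : V) ≠ u} = R \ {u} := by
    ext x; simp [and_comm]
  obtain ⟨x, hxR, hxu⟩ := hne
  rw [← him, ← connected_induce_induce_iff, connected_iff]
  exact ⟨hpre, ⟨⟨⟨x, hxR⟩, hxu⟩⟩⟩

lemma Connected.induce_insert {R : Set V} {u v : V} (hR : (G.induce R).Connected)
    (hv : v ∈ R) (huv : G.Adj u v) : (G.induce (insert u R)).Connected := by
  rw [← Set.union_singleton]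
  exact connected_induce_union hR.preconnected .of_subsingleton hv rfl huv.symm

lemma connected_induce_diff_singleton_iff {R : Set V} {u v : V} (hN : G.neighborSet u = {v})
    (hu : u ∈ R) (hv : v ∈ R) :
    (G.induce (R \ {u})).Connected ↔ (G.induce R).Connected := by
  have huv : G.Adj u v := by simp [← mem_neighborSet, hN]
  refine ⟨fun h => ?_, fun h => h.induce_diff_singleton (hN ▸ Set.subsingleton_singleton)
    ⟨v, hv, huv.ne'⟩⟩
  have := h.induce_insert ⟨hv, huv.ne'⟩ huv
  rwa [Set.insert_sdiff_singleton, Set.insert_eq_of_mem hu] at this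

lemma Connected.mem_of_neighborSet_subset {R : Set V} {u v s : V} (hR : (G.induce R).Connected)
    (hN : G.neighborSet u ⊆ {v}) (hu : u ∈ R) (hs : s ∈ R) (hsu : s ≠ u) : v ∈ R := by
  have : Nontrivial R := ⟨⟨⟨u, hu⟩, ⟨s, hs⟩, fun h => hsu (congrArg Subtype.val h).symm⟩⟩
  obtain ⟨w, hw⟩ := hR.preconnected.exists_adj_of_nontrivial ⟨u, hu⟩
  exact (hN hw : (w : V) = v) ▸ w.2

end SimpleGraph

open SimpleGraph

section

variable {V : Type*} {G : SimpleGraph V}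

lemma image_cutEdges_induce {A R : Set V}
    (hA : ∀ a b, G.Adj a b → a ∈ R → b ∉ R → a ∈ A ∧ b ∈ A) :
    Sym2.map Subtype.val '' cutEdges (G.induce A) {x | (x : V) ∈ R} = cutEdges G R := by
  ext e
  constructor
  · rintro ⟨e', ⟨he', a, b, rfl, ha, hb⟩, rfl⟩
    exact ⟨he', a, b, rfl, ha, hb⟩
  · rintro ⟨he, a, b, rfl, ha, hb⟩
    obtain ⟨haA, hbA⟩ := hA a b he ha hb
    exact ⟨s(⟨a, haA⟩, ⟨b, hbA⟩), ⟨he, ⟨a, haA⟩, ⟨b, hbA⟩, rfl, ha, hb⟩, rfl⟩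

lemma ncard_cutEdges_induce {A R : Set V}
    (hA : ∀ a b, G.Adj a b → a ∈ R → b ∉ R → a ∈ A ∧ b ∈ A) :
    (cutEdges (G.induce A) {x | (x : V) ∈ R}).ncard = (cutEdges G R).ncard := by
  rw [← image_cutEdges_induce hA,
    Set.ncard_image_of_injective _ (Sym2.map.injective Subtype.val_injective)]

def IsSolutionCut (G : SimpleGraph V) (S T : Set V) (ℓ : ℕ) (R : Set V) : Prop :=
  S ⊆ R ∧ T ⊆ Rᶜ ∧ (G.induce R).Connected ∧ (G.induce Rᶜ).Connected ∧ (cutEdges G R).ncard ≤ ℓ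

lemma solution_iff_exists_isSolutionCut {S T : Set V} {ℓ : ℕ} :
    Solution G S T ℓ ↔ ∃ R, IsSolutionCut G S T ℓ R :=
  Iff.rfl

lemma isSolutionCut_induce_ne_iff {S T R : Set V} {u v : V} {ℓ : ℕ}
    (hN : G.neighborSet u = {v}) (huT : u ∉ T) (hu : u ∈ R) (hv : v ∈ R) :
    IsSolutionCut (G.induce {x | x ≠ u}) {x | (x : V) ∈ (S \ {u}) ∪ {v}} {x | (x : V) ∈ T} ℓ
      {x | (x : V) ∈ R} ↔ IsSolutionCut G S T ℓ R := by
  have hS : {x : {x | x ≠ u} | (x : V) ∈ (S \ {u}) ∪ {v}} ⊆ {x | (x : V) ∈ R} ↔ S ⊆ R := by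
    constructor
    · intro h s hs
      by_cases hsu : s = u
      · exact hsu ▸ hu
      · exact @h ⟨s, hsu⟩ (Or.inl ⟨hs, hsu⟩)
    · intro h x hx
      rcases hx with ⟨hxS, -⟩ | hxv
      exacts [h hxS, show (x : V) ∈ R from (Set.mem_singleton_iff.mp hxv) ▸ hv]
  have hT : {x : {x | x ≠ u} | (x : V) ∈ T} ⊆ {x | (x : V) ∈ R}ᶜ ↔ T ⊆ Rᶜ := by
    constructor
    · intro h t ht htR
      exact @h ⟨t, fun htu => huT (htu ▸ ht)⟩ ht htR
    · exact fun h x hx => h hx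
  have hR : Subtype.val '' {x : {x | x ≠ u} | (x : V) ∈ R} = R \ {u} := by
    change Subtype.val '' (Subtype.val ⁻¹' R) = _
    rw [Subtype.image_preimage_val, Set.inter_comm]; rfl
  have hRc : Subtype.val '' {x : {x | x ≠ u} | (x : V) ∈ R}ᶜ = Rᶜ := by
    change Subtype.val '' (Subtype.val ⁻¹' R)ᶜ = _
    rw [← Set.preimage_compl, Subtype.image_preimage_val, Set.inter_eq_right]
    exact fun x hxR hxu => hxR (hxu ▸ hu)
  rw [IsSolutionCut, IsSolutionCut, hS, hT, connected_induce_induce_iff, hR,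
    connected_induce_diff_singleton_iff hN hu hv, connected_induce_induce_iff, hRc,
    ncard_cutEdges_induce]
  rintro a b hab haR hbR
  exact ⟨fun hau => hbR ((hN.subset (hau ▸ hab) : b = v) ▸ hv), fun hbu => hbR (hbu ▸ hu)⟩

end

theorem stmt13_general {V : Type*} (G : SimpleGraph V) (S T : Set V) (u v : V)
    (hST : Disjoint S T)
    (hN : G.neighborSet u = {v})
    (huS : u ∈ S) (hS2 : 2 ≤ S.ncard) (ℓ : ℕ) :
    Solution G S T ℓ ↔
      Solution (G.induce {x | x ≠ u})
        {x | (x : V) ∈ (S \ {u}) ∪ {v}} {x | (x : V) ∈ T} ℓ := by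
  have huT : u ∉ T := Set.disjoint_left.mp hST huS
  have hvu : v ≠ u := (show G.Adj u v by simp [← mem_neighborSet, hN]).ne'
  rw [solution_iff_exists_isSolutionCut, solution_iff_exists_isSolutionCut]
  constructor
  · rintro ⟨R, hR⟩
    have hu : u ∈ R := hR.1 huS
    obtain ⟨s, hs, hsu⟩ := Set.exists_ne_of_one_lt_ncard hS2 u
    have hv : v ∈ R := hR.2.2.1.mem_of_neighborSet_subset hN.subset hu (hR.1 hs) hsu
    exact ⟨_, (isSolutionCut_induce_ne_iff hN huT hu hv).2 hR⟩
  · rintro ⟨R', hR'⟩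
    have hv' : (⟨v, hvu⟩ : {x | x ≠ u}) ∈ R' := hR'.1 (Or.inr rfl)
    have hR'eq : {x : {x | x ≠ u} | (x : V) ∈ insert u (Subtype.val '' R')} = R' := by
      ext ⟨x, hxu⟩; simp [show x ≠ u from hxu]
    refine ⟨insert u (Subtype.val '' R'), (isSolutionCut_induce_ne_iff hN huT
      (Set.mem_insert u _) (Set.mem_insert_of_mem u (Set.mem_image_of_mem _ hv'))).1 ?_⟩
    rwa [hR'eq]

theorem stmt13 {V : Type*} [Fintype V] (G : SimpleGraph V) (S T : Set V) (u v : V)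
    (hconn : G.Connected) (hST : Disjoint S T)
    (hN : G.neighborSet u = {v})
    (huS : u ∈ S) (hS2 : 2 ≤ S.ncard) (hvT : v ∉ T) (ℓ : ℕ) :
    Solution G S T ℓ ↔
      Solution (G.induce {x | x ≠ u})
        {x | (x : V) ∈ (S \ {u}) ∪ {v}} {x | (x : V) ∈ T} ℓ :=
  stmt13_general G S T u v hST hN huS hS2 ℓ
end

section
/- Let G be a connected simple graph, and let G' be obtained from G by adding a disjoint copy H of G together with a single edge from one vertex of H to a fixed vertex s ∈ S. Then for any terminal sets S, T ⊆ V(G): G has a partition (R, B) with S ⊆ R, T ⊆ B, and G[R], G[B] connected, if and only if G' has a partition (R', B') with S ⊆ R', T ⊆ B', and G'[R'], G'[B'] connected. Moreover the minimum number of crossing edges is the same in both graphs. -/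
/-- `G` together with a disjoint copy of itself (on `Sum.inr`) joined to the original
graph by the single edge from `Sum.inl s` to `Sum.inr h0`. -/
def addCopy {V : Type*} (G : SimpleGraph V) (s h0 : V) : SimpleGraph (V ⊕ V) where
  Adj x y :=
    match x, y with
    | Sum.inl a, Sum.inl b => G.Adj a b
    | Sum.inr a, Sum.inr b => G.Adj a b
    | Sum.inl a, Sum.inr b => a = s ∧ b = h0
    | Sum.inr a, Sum.inl b => a = h0 ∧ b = s
  symm := by
    constructor
    rintro (a | a) (b | b) h
    · exact h.symm
    · exact ⟨h.2, h.1⟩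
    · exact ⟨h.2, h.1⟩
    · exact h.symm
  loopless := by
    constructor
    rintro (a | a) h
    · exact G.irrefl h
    · exact G.irrefl h

namespace AddCopyAux

open SimpleGraph Sum

variable {V : Type*} {G : SimpleGraph V} {s h0 : V}

/-- The canonical big side: `R` together with all of the copy. -/
def bigR (R : Set V) : Set (V ⊕ V) := Sum.inl '' R ∪ Sum.inr '' Set.univ

lemma mem_bigR_inl {R : Set V} {v : V} : Sum.inl v ∈ bigR R ↔ v ∈ R := by
  constructor
  · rintro (⟨a, ha, h⟩ | ⟨a, _, h⟩)
    · cases Sum.inl_injective h; exact ha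
    · exact absurd h (by simp)
  · exact fun h => Or.inl ⟨v, h, rfl⟩

lemma mem_bigR_inr {R : Set V} (v : V) : Sum.inr v ∈ bigR R :=
  Or.inr ⟨v, trivial, rfl⟩

lemma compl_bigR (R : Set V) : (bigR R)ᶜ = Sum.inl '' Rᶜ := by
  ext x
  cases x with
  | inl v =>
      simp only [Set.mem_compl_iff, mem_bigR_inl]
      constructor
      · exact fun h => ⟨v, h, rfl⟩
      · rintro ⟨a, ha, h⟩; cases Sum.inl_injective h; exact ha
  | inr v =>
      simp only [Set.mem_compl_iff]
      constructor
      · exact fun h => absurd (mem_bigR_inr v) h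
      · rintro ⟨a, _, h⟩; exact absurd h (by simp)

/-- The induced graph on an `inl`-image is isomorphic to the original induced graph. -/
noncomputable def inlIso (G : SimpleGraph V) (s h0 : V) (A : Set V) :
    G.induce A ≃g (addCopy G s h0).induce (Sum.inl '' A) where
  toEquiv := Equiv.Set.image Sum.inl A Sum.inl_injective
  map_rel_iff' := by
    rintro ⟨a, ha⟩ ⟨b, hb⟩
    rfl

lemma bigR_connected (hconn : G.Connected) {R : Set V} (hsR : s ∈ R)
    (hR : (G.induce R).Connected) :
    ((addCopy G s h0).induce (bigR R)).Connected := by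
  have hbase : (Sum.inl s : V ⊕ V) ∈ bigR R := mem_bigR_inl.2 hsR
  let hom1 : G.induce R →g (addCopy G s h0).induce (bigR R) :=
    ⟨fun v => ⟨Sum.inl v.1, mem_bigR_inl.2 v.2⟩, fun h => h⟩
  let hom2 : G →g (addCopy G s h0).induce (bigR R) :=
    ⟨fun v => ⟨Sum.inr v, mem_bigR_inr v⟩, fun h => h⟩
  have key : ∀ x : ↑(bigR R), ((addCopy G s h0).induce (bigR R)).Reachable x ⟨Sum.inl s, hbase⟩ := by
    rintro ⟨(v | v), hx⟩
    · exact (hR.preconnected ⟨v, mem_bigR_inl.1 hx⟩ ⟨s, hsR⟩).map hom1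
    · refine ((hconn.preconnected v h0).map hom2).trans ?_
      exact SimpleGraph.Adj.reachable (show (addCopy G s h0).Adj (Sum.inr h0) (Sum.inl s) from ⟨rfl, rfl⟩)
  haveI : Nonempty ↑(bigR R) := ⟨⟨Sum.inl s, hbase⟩⟩
  exact ⟨fun x y => (key x).trans (key y).symm⟩

lemma induce_connected_of_bigR {R : Set V} (hsR : s ∈ R)
    (h : ((addCopy G s h0).induce (bigR R)).Connected) : (G.induce R).Connected := by
  let proj : ∀ x : V ⊕ V, x ∈ bigR R → {v // v ∈ R} := fun x =>
    match x with
    | Sum.inl v => fun hx => ⟨v, mem_bigR_inl.1 hx⟩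
    | Sum.inr _ => fun _ => ⟨s, hsR⟩
  have key : ∀ (x y : ↑(bigR R)) (_ : ((addCopy G s h0).induce (bigR R)).Walk x y),
      (G.induce R).Reachable (proj x.1 x.2) (proj y.1 y.2) := by
    intro x y p
    induction p with
    | nil => exact SimpleGraph.Reachable.refl _
    | @cons u v w hadj p ih =>
        obtain ⟨(a | a), hu⟩ := u <;> obtain ⟨(b | b), hv⟩ := v
        · exact (SimpleGraph.Adj.reachable (show (G.induce R).Adj ⟨a, _⟩ ⟨b, _⟩ from hadj)).trans ih
        · have has : a = s := hadj.1
          have : proj (Sum.inl a) hu = (⟨s, hsR⟩ : {v // v ∈ R}) := Subtype.ext has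
          rw [show proj (Sum.inl a) hu = proj (Sum.inr b) hv from this]
          exact ih
        · have hbs : b = s := hadj.2
          have : proj (Sum.inl b) hv = (⟨s, hsR⟩ : {v // v ∈ R}) := Subtype.ext hbs
          rw [show (proj (Sum.inr a) hu : {v // v ∈ R}) = proj (Sum.inl b) hv from this.symm]
          exact ih
        · exact ih
  rw [SimpleGraph.connected_iff]
  refine ⟨?_, ⟨⟨s, hsR⟩⟩⟩
  rintro ⟨a, ha⟩ ⟨b, hb⟩
  obtain ⟨p⟩ := h.preconnected ⟨Sum.inl a, mem_bigR_inl.2 ha⟩ ⟨Sum.inl b, mem_bigR_inl.2 hb⟩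
  exact key _ _ p

lemma cutEdges_bigR {R : Set V} (hsR : s ∈ R) :
    cutEdges (addCopy G s h0) (bigR R) = Sym2.map Sum.inl '' cutEdges G R := by
  ext e
  constructor
  · rintro ⟨he, a, b, rfl, haR, hbR⟩
    rw [SimpleGraph.mem_edgeSet] at he
    match a, b with
    | Sum.inl a, Sum.inl b =>
        refine ⟨s(a, b), ⟨G.mem_edgeSet.2 he, a, b, rfl, mem_bigR_inl.1 haR,
          fun hb => hbR (mem_bigR_inl.2 hb)⟩, by simp⟩
    | Sum.inl a, Sum.inr b => exact absurd (mem_bigR_inr b) hbR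
    | Sum.inr a, Sum.inl b =>
        exact absurd (mem_bigR_inl.2 (he.2 ▸ hsR)) hbR
    | Sum.inr a, Sum.inr b => exact absurd (mem_bigR_inr b) hbR
  · rintro ⟨e', ⟨he, a, b, rfl, ha, hb⟩, rfl⟩
    refine ⟨(addCopy G s h0).mem_edgeSet.2 (show (addCopy G s h0).Adj (Sum.inl a) (Sum.inl b) from he),
      Sum.inl a, Sum.inl b, by simp, mem_bigR_inl.2 ha, fun h => hb (mem_bigR_inl.1 h)⟩

lemma inr_subset {R' : Set (V ⊕ V)} (hsR' : Sum.inl s ∈ R') {t : V} (htR' : Sum.inl t ∈ R'ᶜ)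
    (hcompl : ((addCopy G s h0).induce R'ᶜ).Connected) : ∀ v, Sum.inr v ∈ R' := by
  intro v
  by_contra hv
  have hv' : Sum.inr v ∈ R'ᶜ := hv
  obtain ⟨p⟩ := hcompl.preconnected ⟨Sum.inr v, hv'⟩ ⟨Sum.inl t, htR'⟩
  have key : ∀ (x y : ↑(R'ᶜ)) (_ : ((addCopy G s h0).induce R'ᶜ).Walk x y),
      (∃ a, x.1 = Sum.inr a) → ∃ b, y.1 = Sum.inr b := by
    intro x y p
    induction p with
    | nil => exact id
    | @cons u w z hadj p ih =>
        obtain ⟨u1, hu⟩ := u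
        rintro ⟨a, ha⟩
        obtain rfl : u1 = Sum.inr a := ha
        obtain ⟨(b | b), hw⟩ := w
        · exact absurd (show Sum.inl b ∈ R' by rw [hadj.2]; exact hsR') hw
        · exact ih ⟨b, rfl⟩
  obtain ⟨b, hb⟩ := key _ _ p ⟨v, rfl⟩
  simp at hb

lemma bigR_preimage_eq {R' : Set (V ⊕ V)} (hinr : ∀ v, Sum.inr v ∈ R') :
    R' = bigR (Sum.inl ⁻¹' R') := by
  ext x
  cases x with
  | inl v => rw [mem_bigR_inl]; rfl
  | inr v => simp [hinr v, mem_bigR_inr]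

end AddCopyAux

open AddCopyAux Sum

theorem stmt19 {V : Type*} [Fintype V] (G : SimpleGraph V) (S T : Set V) (s h0 : V)
    (hconn : G.Connected) (hST : Disjoint S T) (hSne : S.Nonempty) (hTne : T.Nonempty)
    (hs : s ∈ S) :
    ((∃ R : Set V, S ⊆ R ∧ T ⊆ Rᶜ ∧ (G.induce R).Connected ∧ (G.induce Rᶜ).Connected) ↔
      (∃ R' : Set (V ⊕ V), Sum.inl '' S ⊆ R' ∧ Sum.inl '' T ⊆ R'ᶜ ∧
        ((addCopy G s h0).induce R').Connected ∧ ((addCopy G s h0).induce R'ᶜ).Connected)) ∧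
    (∀ ℓ : ℕ, Solution G S T ℓ ↔
      Solution (addCopy G s h0) (Sum.inl '' S) (Sum.inl '' T) ℓ) := by
  -- forward direction data
  have fwd : ∀ R : Set V, S ⊆ R → T ⊆ Rᶜ → (G.induce R).Connected → (G.induce Rᶜ).Connected →
      (Sum.inl '' S ⊆ bigR R ∧ Sum.inl '' T ⊆ (bigR R)ᶜ ∧
        ((addCopy G s h0).induce (bigR R)).Connected ∧
        ((addCopy G s h0).induce (bigR R)ᶜ).Connected ∧
        (cutEdges (addCopy G s h0) (bigR R)).ncard = (cutEdges G R).ncard) := by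
    intro R hS hT hR hRc
    have hsR : s ∈ R := hS hs
    refine ⟨?_, ?_, bigR_connected hconn hsR hR, ?_, ?_⟩
    · rintro _ ⟨v, hv, rfl⟩; exact mem_bigR_inl.2 (hS hv)
    · rw [compl_bigR]; exact Set.image_mono hT
    · rw [compl_bigR]; exact ((inlIso G s h0 Rᶜ).connected_iff).1 hRc
    · rw [cutEdges_bigR hsR]
      exact Set.ncard_image_of_injective _ (Sym2.map.injective Sum.inl_injective)
  have bwd : ∀ R' : Set (V ⊕ V), Sum.inl '' S ⊆ R' → Sum.inl '' T ⊆ R'ᶜ →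
      ((addCopy G s h0).induce R').Connected → ((addCopy G s h0).induce R'ᶜ).Connected →
      (S ⊆ Sum.inl ⁻¹' R' ∧ T ⊆ (Sum.inl ⁻¹' R')ᶜ ∧
        (G.induce (Sum.inl ⁻¹' R')).Connected ∧ (G.induce (Sum.inl ⁻¹' R')ᶜ).Connected ∧
        (cutEdges (addCopy G s h0) R').ncard = (cutEdges G (Sum.inl ⁻¹' R')).ncard) := by
    intro R' h1 h2 h3 h4
    have hsR' : Sum.inl s ∈ R' := h1 ⟨s, hs, rfl⟩
    obtain ⟨t, ht⟩ := hTne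
    have htR' : Sum.inl t ∈ R'ᶜ := h2 ⟨t, ht, rfl⟩
    have hinr := inr_subset hsR' htR' h4
    have heq := bigR_preimage_eq hinr
    set R : Set V := Sum.inl ⁻¹' R' with hRdef
    have hsR : s ∈ R := hsR'
    refine ⟨fun v hv => h1 ⟨v, hv, rfl⟩, fun v hv hvR => h2 ⟨v, hv, rfl⟩ hvR, ?_, ?_, ?_⟩
    · exact induce_connected_of_bigR hsR (heq ▸ h3)
    · have h4' := h4
      rw [heq, compl_bigR] at h4'
      exact ((inlIso G s h0 Rᶜ).connected_iff).2 h4'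
    · rw [heq, cutEdges_bigR hsR]
      exact Set.ncard_image_of_injective _ (Sym2.map.injective Sum.inl_injective)
  constructor
  · constructor
    · rintro ⟨R, hS, hT, hR, hRc⟩
      obtain ⟨a, b, c, d, _⟩ := fwd R hS hT hR hRc
      exact ⟨bigR R, a, b, c, d⟩
    · rintro ⟨R', h1, h2, h3, h4⟩
      obtain ⟨a, b, c, d, _⟩ := bwd R' h1 h2 h3 h4
      exact ⟨Sum.inl ⁻¹' R', a, b, c, d⟩
  · intro ℓ
    constructor
    · rintro ⟨R, hS, hT, hR, hRc, hcard⟩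
      obtain ⟨a, b, c, d, e⟩ := fwd R hS hT hR hRc
      exact ⟨bigR R, a, b, c, d, e ▸ hcard⟩
    · rintro ⟨R', h1, h2, h3, h4, hcard⟩
      obtain ⟨a, b, c, d, e⟩ := bwd R' h1 h2 h3 h4
      exact ⟨Sum.inl ⁻¹' R', a, b, c, d, e ▸ hcard⟩
end
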